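/- arXiv:2305.17310 — 4 statements merged into one kernel-verified Lean document; each statement's English description precedes it below -/
import Mathlib

section
/- Let S be a finite set, d a positive integer, and let ψ : S → ℝ^d be a random map such that the d·|S| coordinates {ψ(s)_i : s ∈ S, 1 ≤ i ≤ d} are independent and each is uniformly distributed on {−1/√d, +1/√d}. For arbitrary subsets A, B ⊆ S, define the random vectors a = Σ_{x ∈ A} ψ(x) and b = Σ_{y ∈ B} ψ(y). Then the dot product a · b is an unbiased estimator of the intersection size: E[a · b] = |A ∩ B|. -/
/-!
Expanding the dot product, `E[a · b] = ∑ᵢ ∑_{x ∈ A} ∑_{y ∈ B} E[ψ(x)ᵢ ψ(y)ᵢ]`. For `x ≠ y` the two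
coordinates are independent with mean zero, so only the diagonal terms `x = y ∈ A ∩ B` survive,
each contributing `E[ψ(x)ᵢ²] = 1/d`; summing over the `d` coordinates gives `|A ∩ B|`.
-/

open MeasureTheory ProbabilityTheory

section TwoPointValued

variable {Ω : Type*} [MeasurableSpace Ω] {μ : Measure Ω} {X : Ω → ℝ} {a b c : ℝ}

theorem ae_eq_or_eq_of_measure_add_eq_one [IsProbabilityMeasure μ] (hX : Measurable X)
    (hab : a ≠ b) (h : μ {ω | X ω = a} + μ {ω | X ω = b} = 1) :
    ∀ᵐ ω ∂μ, X ω = a ∨ X ω = b := by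
  have hmeas : MeasurableSet ({ω | X ω = a} ∪ {ω | X ω = b}) :=
    (hX (measurableSet_singleton a)).union (hX (measurableSet_singleton b))
  have hdisj : Disjoint {ω | X ω = a} {ω | X ω = b} :=
    Set.disjoint_left.2 fun ω ha hb => hab (ha.symm.trans hb)
  have hfull : μ ({ω | X ω = a} ∪ {ω | X ω = b}) = 1 := by
    rwa [measure_union hdisj (hX (measurableSet_singleton b))]
  exact (prob_compl_eq_zero_iff hmeas).2 hfull

theorem memLp_top_of_ae_eq_or_eq (hX : Measurable X) (h : ∀ᵐ ω ∂μ, X ω = a ∨ X ω = b) :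
    MemLp X ⊤ μ := by
  refine memLp_top_of_bound hX.aestronglyMeasurable (max |a| |b|) ?_
  filter_upwards [h] with ω hω
  rcases hω with hω | hω <;> simp [hω]

theorem integral_eq_of_ae_eq_or_eq [IsFiniteMeasure μ] (hX : Measurable X) (hab : a ≠ b)
    (h : ∀ᵐ ω ∂μ, X ω = a ∨ X ω = b) :
    ∫ ω, X ω ∂μ = μ.real {ω | X ω = a} * a + μ.real {ω | X ω = b} * b := by
  have ha : MeasurableSet {ω | X ω = a} := hX (measurableSet_singleton a)
  have hb : MeasurableSet {ω | X ω = b} := hX (measurableSet_singleton b)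
  have hsplit : X =ᵐ[μ] fun ω =>
      {ω | X ω = a}.indicator (fun _ => a) ω + {ω | X ω = b}.indicator (fun _ => b) ω := by
    filter_upwards [h] with ω hω
    rcases hω with hω | hω
    · simp [Set.indicator, hω, hab]
    · simp [Set.indicator, hω, hab.symm]
  rw [integral_congr_ae hsplit, integral_add ((integrable_const a).indicator ha)
    ((integrable_const b).indicator hb), integral_indicator_const a ha,
    integral_indicator_const b hb, smul_eq_mul, smul_eq_mul]

theorem ae_eq_or_eq_neg_of_measure_eq_half [IsProbabilityMeasure μ] (hX : Measurable X)
    (hc : c ≠ 0) (hpos : μ {ω | X ω = c} = 1 / 2) (hneg : μ {ω | X ω = -c} = 1 / 2) :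
    ∀ᵐ ω ∂μ, X ω = c ∨ X ω = -c :=
  ae_eq_or_eq_of_measure_add_eq_one hX (fun h => hc (by linarith))
    (by rw [hpos, hneg, ENNReal.add_halves])

theorem integral_eq_zero_of_measure_eq_half [IsProbabilityMeasure μ] (hX : Measurable X)
    (hc : c ≠ 0) (hpos : μ {ω | X ω = c} = 1 / 2) (hneg : μ {ω | X ω = -c} = 1 / 2) :
    ∫ ω, X ω ∂μ = 0 := by
  rw [integral_eq_of_ae_eq_or_eq hX (fun h => hc (by linarith))
    (ae_eq_or_eq_neg_of_measure_eq_half hX hc hpos hneg), measureReal_def, measureReal_def,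
    hpos, hneg]
  ring

theorem integral_mul_self_of_ae_eq_or_eq_neg [IsProbabilityMeasure μ]
    (h : ∀ᵐ ω ∂μ, X ω = c ∨ X ω = -c) : ∫ ω, X ω * X ω ∂μ = c ^ 2 := by
  have hsq : (fun ω => X ω * X ω) =ᵐ[μ] fun _ => c ^ 2 := by
    filter_upwards [h] with ω hω
    rcases hω with hω | hω <;> simp [hω, sq]
  simp [integral_congr_ae hsq]

end TwoPointValued

theorem integral_mul_eq_ite_of_iIndepFun {Ω ι : Type*} [MeasurableSpace Ω] {μ : Measure Ω}
    [IsProbabilityMeasure μ] [DecidableEq ι] {Y : ι → Ω → ℝ} {c : ℝ}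
    (hY : ∀ p, Measurable (Y p)) (hindep : iIndepFun Y μ) (hc : c ≠ 0)
    (hunif : ∀ p, μ {ω | Y p ω = c} = 1 / 2 ∧ μ {ω | Y p ω = -c} = 1 / 2) (p q : ι) :
    ∫ ω, Y p ω * Y q ω ∂μ = if p = q then c ^ 2 else 0 := by
  split_ifs with hpq
  · subst hpq
    exact integral_mul_self_of_ae_eq_or_eq_neg
      (ae_eq_or_eq_neg_of_measure_eq_half (hY p) hc (hunif p).1 (hunif p).2)
  · have hprod := (hindep.indepFun hpq).integral_mul_eq_mul_integral
      (hY p).aestronglyMeasurable (hY q).aestronglyMeasurable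
    rwa [integral_eq_zero_of_measure_eq_half (hY p) hc (hunif p).1 (hunif p).2, zero_mul] at hprod

theorem integral_finsetSum_mul_finsetSum_of_orthogonal {Ω ι : Type*} [MeasurableSpace Ω]
    {μ : Measure Ω} [DecidableEq ι] {Z : ι → Ω → ℝ} {v : ℝ} (hZ : ∀ x, MemLp (Z x) 2 μ)
    (horth : ∀ x y, ∫ ω, Z x ω * Z y ω ∂μ = if x = y then v else 0) (A B : Finset ι) :
    ∫ ω, (∑ x ∈ A, Z x ω) * (∑ y ∈ B, Z y ω) ∂μ = (A ∩ B).card * v := by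
  have hint : ∀ x y, Integrable (fun ω => Z x ω * Z y ω) μ := fun x y =>
    (hZ x).integrable_mul (hZ y)
  simp_rw [Finset.sum_mul_sum]
  rw [integral_finsetSum _ fun x _ => integrable_finsetSum _ fun y _ => hint x y]
  simp_rw [integral_finsetSum _ fun y _ => hint _ y, horth, Finset.sum_ite_eq,
    Finset.sum_ite_mem, Finset.sum_const, nsmul_eq_mul]

theorem dothash_expected_dot_eq_inter_card_general
    {Ω : Type*} [MeasurableSpace Ω] (μ : Measure Ω) [IsProbabilityMeasure μ]
    {S : Type*} [DecidableEq S]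
    (d : ℕ) (hd : 0 < d)
    (ψ : Ω → S → Fin d → ℝ)
    (hmeas : ∀ (s : S) (i : Fin d), Measurable fun ω => ψ ω s i)
    (hindep : iIndepFun (fun (p : S × Fin d) ω => ψ ω p.1 p.2) μ)
    (hunif : ∀ (s : S) (i : Fin d),
      μ {ω | ψ ω s i = 1 / Real.sqrt d} = 1/2 ∧
      μ {ω | ψ ω s i = -(1 / Real.sqrt d)} = 1/2)
    (A B : Finset S) :
    ∫ ω, ∑ i, (∑ x ∈ A, ψ ω x i) * (∑ y ∈ B, ψ ω y i) ∂μ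
      = ((A ∩ B).card : ℝ) := by
  set c : ℝ := 1 / Real.sqrt d
  have hdpos : (0 : ℝ) < d := Nat.cast_pos.2 hd
  have hc : c ≠ 0 := by positivity
  have hc2 : c ^ 2 = 1 / d := by rw [div_pow, Real.sq_sqrt hdpos.le, one_pow]
  have hL2 : ∀ i x, MemLp (fun ω => ψ ω x i) 2 μ := fun i x =>
    (memLp_top_of_ae_eq_or_eq (hmeas x i) (ae_eq_or_eq_neg_of_measure_eq_half (hmeas x i) hc
      (hunif x i).1 (hunif x i).2)).mono_exponent le_top
  have horth : ∀ i x y, ∫ ω, ψ ω x i * ψ ω y i ∂μ = if x = y then c ^ 2 else 0 := by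
    intro i x y
    simpa using integral_mul_eq_ite_of_iIndepFun (fun p => hmeas p.1 p.2) hindep hc
      (fun p => hunif p.1 p.2) (x, i) (y, i)
  calc ∫ ω, ∑ i, (∑ x ∈ A, ψ ω x i) * (∑ y ∈ B, ψ ω y i) ∂μ
      = ∑ i : Fin d, ∫ ω, (∑ x ∈ A, ψ ω x i) * (∑ y ∈ B, ψ ω y i) ∂μ :=
        integral_finsetSum _ fun i _ => (memLp_finsetSum A fun x _ => hL2 i x).integrable_mul
          (memLp_finsetSum B fun y _ => hL2 i y)
    _ = ∑ _ : Fin d, ((A ∩ B).card : ℝ) * c ^ 2 := Finset.sum_congr rfl fun i _ =>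
        integral_finsetSum_mul_finsetSum_of_orthogonal (hL2 i) (horth i) A B
    _ = (A ∩ B).card := by
        rw [Finset.sum_const, Finset.card_univ, Fintype.card_fin, nsmul_eq_mul, hc2]
        field_simp

/-- The dot product of DotHash sketches is an unbiased estimator of the
intersection size: `E[a · b] = |A ∩ B|`. -/
theorem dothash_expected_dot_eq_inter_card
    {Ω : Type*} [MeasurableSpace Ω] (μ : Measure Ω) [IsProbabilityMeasure μ]
    {S : Type*} [Fintype S] [DecidableEq S]
    (d : ℕ) (hd : 0 < d)
    (ψ : Ω → S → Fin d → ℝ)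
    (hmeas : ∀ (s : S) (i : Fin d), Measurable fun ω => ψ ω s i)
    (hindep : iIndepFun (fun (p : S × Fin d) ω => ψ ω p.1 p.2) μ)
    (hunif : ∀ (s : S) (i : Fin d),
      μ {ω | ψ ω s i = 1 / Real.sqrt d} = 1/2 ∧
      μ {ω | ψ ω s i = -(1 / Real.sqrt d)} = 1/2)
    (A B : Finset S) :
    ∫ ω, ∑ i, (∑ x ∈ A, ψ ω x i) * (∑ y ∈ B, ψ ω y i) ∂μ
      = ((A ∩ B).card : ℝ) :=
  dothash_expected_dot_eq_inter_card_general μ d hd ψ hmeas hindep hunif A B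
end

section
/- Let S be a finite set, d a positive integer, and let ψ : S → ℝ^d be a random map such that the d·|S| coordinates {ψ(s)_i : s ∈ S, 1 ≤ i ≤ d} are independent and each is uniformly distributed on {−1/√d, +1/√d}. For arbitrary subsets A, B ⊆ S, define the random vectors a = Σ_{x ∈ A} ψ(x) and b = Σ_{y ∈ B} ψ(y). Then the variance of the dot product satisfies Var[a · b] = (1/d)(|A|·|B| + |A ∩ B|² − 2|A ∩ B|). -/
open MeasureTheory ProbabilityTheory

/-! Write `a · b = ∑_{p,q} M p q * Y p * Y q` as a quadratic form in the independent coordinates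
`Y (s, i) = ψ(s)_i`, where `M (x, i) (y, j) = [i = j ∧ x ∈ A ∧ y ∈ B]`. A product of independent
`±c` signs has mean `c ^ k` when every index occurs an even number of times and `0` otherwise, so
`Cov(Y p * Y q, Y r * Y t) = c⁴ ([p = r ∧ q = t] + [p = t ∧ q = r] - 2 [p = q = r = t])`.
Summing against `M` gives `Var = c⁴ (∑ M p q * (M p q + M q p) - 2 ∑ M p p ^ 2)`; for the DotHash
coefficients this is `c⁴ d (|A| |B| + |A ∩ B|² - 2 |A ∩ B|)`, and `c⁴ d = 1 / d`. -/

def IsScaledRademacher {Ω : Type*} [MeasurableSpace Ω] (μ : Measure Ω) (Z : Ω → ℝ) (c : ℝ) :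
    Prop :=
  μ {ω | Z ω = c} = 1 / 2 ∧ μ {ω | Z ω = -c} = 1 / 2

namespace IsScaledRademacher

variable {Ω : Type*} [MeasurableSpace Ω] {μ : Measure Ω} [IsProbabilityMeasure μ]
  {Z : Ω → ℝ} {c : ℝ}

theorem ae_eq_or_eq_neg (h : IsScaledRademacher μ Z c) (hZ : Measurable Z) (hc : c ≠ 0) :
    ∀ᵐ ω ∂μ, Z ω = c ∨ Z ω = -c := by
  have hdisj : Disjoint {ω | Z ω = c} {ω | Z ω = -c} :=
    Set.disjoint_left.2 fun ω (h₁ : Z ω = c) (h₂ : Z ω = -c) => hc (by linarith)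
  have hunion : μ ({ω | Z ω = c} ∪ {ω | Z ω = -c}) = 1 := by
    rw [measure_union hdisj (hZ (measurableSet_singleton _)), h.1, h.2, ENNReal.add_halves]
  have hm : MeasurableSet {ω | Z ω = c ∨ Z ω = -c} :=
    (hZ (measurableSet_singleton c)).union (hZ (measurableSet_singleton (-c)))
  exact (ae_iff_measure_eq hm.nullMeasurableSet).2 (hunion.trans measure_univ.symm)

theorem memLp_top (h : IsScaledRademacher μ Z c) (hZ : Measurable Z) (hc : c ≠ 0) :
    MemLp Z ⊤ μ :=
  memLp_top_of_bound hZ.aestronglyMeasurable |c| <| by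
    filter_upwards [h.ae_eq_or_eq_neg hZ hc] with ω hω
    rcases hω with hω | hω <;> simp [hω]

theorem integral_pow (h : IsScaledRademacher μ Z c) (hZ : Measurable Z) (hc : c ≠ 0) (k : ℕ) :
    ∫ ω, Z ω ^ k ∂μ = if Even k then c ^ k else 0 := by
  have hne : c ≠ -c := fun h' => hc (by linarith)
  have hm (a : ℝ) : MeasurableSet {ω | Z ω = a} := hZ (measurableSet_singleton a)
  have hsplit : (fun ω => Z ω ^ k) =ᵐ[μ]
      {ω | Z ω = c}.indicator (fun _ => c ^ k) + {ω | Z ω = -c}.indicator (fun _ => (-c) ^ k) := by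
    filter_upwards [h.ae_eq_or_eq_neg hZ hc] with ω hω
    rcases hω with hω | hω <;> simp [hω, hne, hne.symm]
  have hhalf (a : ℝ) (ha : μ {ω | Z ω = a} = 1 / 2) : μ.real {ω | Z ω = a} = 1 / 2 := by
    simp [measureReal_def, ha]
  rw [integral_congr_ae hsplit, integral_add', integral_indicator_const _ (hm c),
    integral_indicator_const _ (hm (-c)), hhalf _ h.1, hhalf _ h.2]
  · rcases Nat.even_or_odd k with hk | hk
    · simp [hk, hk.neg_pow]
      ring
    · simp [hk, hk.neg_pow, Nat.not_even_iff_odd]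
  all_goals exact (integrable_const _).indicator (hm _)

end IsScaledRademacher

theorem Multiset.prod_map_eq_prod_pow_count {ι M : Type*} [Fintype ι] [DecidableEq ι]
    [CommMonoid M] (m : Multiset ι) (f : ι → M) : (m.map f).prod = ∏ u, f u ^ m.count u := by
  rw [Finset.prod_multiset_map_count]
  exact Finset.prod_subset (Finset.subset_univ _) fun u _ hu => by
    rw [Multiset.count_eq_zero_of_notMem (by simpa using hu), pow_zero]

theorem ite_forall_even_count_four {ι : Type*} [DecidableEq ι] (p q r t : ι) (c : ℝ) :
    (if ∀ u ∈ ({p, q, r, t} : Multiset ι), Even (Multiset.count u {p, q, r, t}) then c ^ 4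
      else 0) =
      c ^ 4 * ((if p = q ∧ r = t then 1 else 0) + (if p = r ∧ q = t then 1 else 0)
        + (if p = t ∧ q = r then 1 else 0) - 2 * if p = q ∧ q = r ∧ r = t then 1 else 0) := by
  simp only [Multiset.insert_eq_cons, Multiset.forall_mem_cons, Multiset.mem_singleton, forall_eq,
    Multiset.count_cons, Multiset.count_singleton]
  by_cases hpq : p = q <;> by_cases hpr : p = r <;> by_cases hpt : p = t <;>
    by_cases hqr : q = r <;> by_cases hqt : q = t <;> by_cases hrt : r = t <;>
    simp_all [parity_simps, eq_comm]
  norm_num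

section IndependentSigns

variable {Ω ι : Type*} [MeasurableSpace Ω] {μ : Measure Ω} [IsProbabilityMeasure μ]
  [Fintype ι] [DecidableEq ι] {Y : ι → Ω → ℝ} {c : ℝ}

theorem integral_multiset_prod_of_isScaledRademacher (hind : iIndepFun Y μ)
    (hYm : ∀ u, Measurable (Y u)) (hY : ∀ u, IsScaledRademacher μ (Y u) c) (hc : c ≠ 0)
    (m : Multiset ι) :
    ∫ ω, (m.map (Y · ω)).prod ∂μ =
      if ∀ u ∈ m, Even (m.count u) then c ^ Multiset.card m else 0 := by
  simp_rw [Multiset.prod_map_eq_prod_pow_count]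
  rw [hind.integral_fun_prod_comp (f := fun u x => x ^ m.count u)
    (fun u => (hYm u).aemeasurable) (fun u => by fun_prop)]
  simp_rw [(hY _).integral_pow (hYm _) hc, Fintype.prod_ite_zero, Finset.prod_pow_eq_pow_sum,
    Multiset.sum_count_eq_card (fun _ _ => Finset.mem_univ _)]
  congr 1
  exact propext ⟨fun h u _ => h u, fun h u => by
    by_cases hu : u ∈ m
    · exact h u hu
    · simp [Multiset.count_eq_zero_of_notMem hu]⟩

theorem integral_mul_of_isScaledRademacher (hind : iIndepFun Y μ)
    (hYm : ∀ u, Measurable (Y u)) (hY : ∀ u, IsScaledRademacher μ (Y u) c) (hc : c ≠ 0)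
    (p q : ι) : ∫ ω, Y p ω * Y q ω ∂μ = if p = q then c ^ 2 else 0 := by
  calc ∫ ω, Y p ω * Y q ω ∂μ = ∫ ω, (({p, q} : Multiset ι).map (Y · ω)).prod ∂μ := by simp
    _ = if p = q then c ^ 2 else 0 := by
      rw [integral_multiset_prod_of_isScaledRademacher hind hYm hY hc]
      by_cases hpq : p = q <;> simp [hpq, eq_comm]

theorem integral_mul_mul_mul_of_isScaledRademacher (hind : iIndepFun Y μ)
    (hYm : ∀ u, Measurable (Y u)) (hY : ∀ u, IsScaledRademacher μ (Y u) c) (hc : c ≠ 0)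
    (p q r t : ι) :
    ∫ ω, Y p ω * Y q ω * Y r ω * Y t ω ∂μ =
      c ^ 4 * ((if p = q ∧ r = t then 1 else 0) + (if p = r ∧ q = t then 1 else 0)
        + (if p = t ∧ q = r then 1 else 0) - 2 * if p = q ∧ q = r ∧ r = t then 1 else 0) := by
  calc ∫ ω, Y p ω * Y q ω * Y r ω * Y t ω ∂μ
      = ∫ ω, (({p, q, r, t} : Multiset ι).map (Y · ω)).prod ∂μ := by simp [mul_assoc]
    _ = _ := integral_multiset_prod_of_isScaledRademacher hind hYm hY hc _
    _ = _ := by convert ite_forall_even_count_four p q r t c using 2; simp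

theorem covariance_mul_mul_of_isScaledRademacher (hind : iIndepFun Y μ)
    (hYm : ∀ u, Measurable (Y u)) (hY : ∀ u, IsScaledRademacher μ (Y u) c) (hc : c ≠ 0)
    (p q r t : ι) :
    cov[fun ω => Y p ω * Y q ω, fun ω => Y r ω * Y t ω; μ] =
      c ^ 4 * ((if p = r ∧ q = t then 1 else 0) + (if p = t ∧ q = r then 1 else 0)
        - 2 * if p = q ∧ q = r ∧ r = t then 1 else 0) := by
  have hYtop (p : ι) : MemLp (Y p) ⊤ μ := (hY p).memLp_top (hYm p) hc
  have hY2 (p q : ι) : MemLp (fun ω => Y p ω * Y q ω) 2 μ :=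
    ((hYtop q).mul' (hYtop p)).mono_exponent le_top
  rw [covariance_eq_sub (hY2 p q) (hY2 r t)]
  simp only [Pi.mul_apply, ← mul_assoc]
  rw [integral_mul_mul_mul_of_isScaledRademacher hind hYm hY hc,
    integral_mul_of_isScaledRademacher hind hYm hY hc,
    integral_mul_of_isScaledRademacher hind hYm hY hc]
  by_cases hpq : p = q <;> by_cases hrt : r = t <;> simp [hpq, hrt]
  ring

theorem variance_sum_sum_mul_of_isScaledRademacher (hind : iIndepFun Y μ)
    (hYm : ∀ u, Measurable (Y u)) (hY : ∀ u, IsScaledRademacher μ (Y u) c) (hc : c ≠ 0)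
    (M : ι → ι → ℝ) :
    variance (fun ω => ∑ p, ∑ q, M p q * (Y p ω * Y q ω)) μ =
      c ^ 4 * (∑ p, ∑ q, M p q * (M p q + M q p) - 2 * ∑ p, M p p ^ 2) := by
  have hYtop (p : ι) : MemLp (Y p) ⊤ μ := (hY p).memLp_top (hYm p) hc
  have hY2 (p q : ι) : MemLp (fun ω => M p q * (Y p ω * Y q ω)) 2 μ :=
    (((hYtop q).mul' (hYtop p)).const_mul _).mono_exponent le_top
  rw [variance_fun_sum fun p => memLp_finsetSum _ fun q _ => hY2 p q]
  simp_rw [covariance_fun_sum_fun_sum (hY2 _) (hY2 _), covariance_const_mul_left,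
    covariance_const_mul_right, covariance_mul_mul_of_isScaledRademacher hind hYm hY hc]
  simp only [mul_left_comm _ (c ^ 4), ← Finset.mul_sum]
  congr 1
  simp only [mul_add, mul_sub, Finset.sum_add_distrib, Finset.sum_sub_distrib, ite_and, mul_ite,
    mul_zero, mul_one, Finset.sum_ite_irrel, Finset.sum_const_zero, Finset.sum_ite_eq,
    Finset.sum_ite_eq', Finset.mem_univ, if_true, sq]
  simp only [← mul_assoc, ← Finset.sum_mul]
  ring

end IndependentSigns

section DotHash

variable {S : Type*} [Fintype S] [DecidableEq S] {d : ℕ}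

def dotHashCoeff (A B : Finset S) : S × Fin d → S × Fin d → ℝ
  | (x, i), (y, j) => if i = j ∧ x ∈ A ∧ y ∈ B then 1 else 0

theorem sum_mul_sum_eq_sum_dotHashCoeff (A B : Finset S) (v : S → Fin d → ℝ) :
    ∑ i, (∑ x ∈ A, v x i) * (∑ y ∈ B, v y i) =
      ∑ p, ∑ q, dotHashCoeff A B p q * (v p.1 p.2 * v q.1 q.2) := by
  simp [dotHashCoeff, Fintype.sum_prod_type, ite_and, Finset.sum_mul_sum,
    Finset.sum_comm (γ := Fin d)]

theorem sum_dotHashCoeff_mul_add (A B : Finset S) :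
    ∑ p, ∑ q, dotHashCoeff A B p q * (dotHashCoeff A B p q + dotHashCoeff (d := d) A B q p) =
      d * (A.card * B.card + (A ∩ B).card ^ 2) := by
  simp only [Fintype.sum_prod_type, dotHashCoeff]
  simp [ite_and, mul_add, Finset.sum_add_distrib, Finset.sum_ite_mem, Finset.inter_comm B A]
  ring

theorem sum_dotHashCoeff_diag_sq (A B : Finset S) :
    ∑ p, dotHashCoeff (d := d) A B p p ^ 2 = d * (A ∩ B).card := by
  simp only [Fintype.sum_prod_type, dotHashCoeff]
  simp [ite_and, Finset.sum_ite_mem, mul_comm]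

end DotHash

/-- The variance of the dot product of DotHash sketches satisfies
`Var[a · b] = (1/d)(|A|·|B| + |A ∩ B|² − 2|A ∩ B|)`. -/
theorem dothash_variance_dot
    {Ω : Type*} [MeasurableSpace Ω] (μ : Measure Ω) [IsProbabilityMeasure μ]
    {S : Type*} [Fintype S] [DecidableEq S]
    (d : ℕ) (hd : 0 < d)
    (ψ : Ω → S → Fin d → ℝ)
    (hmeas : ∀ (s : S) (i : Fin d), Measurable fun ω => ψ ω s i)
    (hindep : iIndepFun
      (fun (p : S × Fin d) ω => ψ ω p.1 p.2) μ)
    (hunif : ∀ (s : S) (i : Fin d),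
      μ {ω | ψ ω s i = 1 / Real.sqrt d} = 1/2 ∧
      μ {ω | ψ ω s i = -(1 / Real.sqrt d)} = 1/2)
    (A B : Finset S) :
    variance (fun ω => ∑ i, (∑ x ∈ A, ψ ω x i) * (∑ y ∈ B, ψ ω y i)) μ
      = (1 / (d : ℝ)) * ((A.card : ℝ) * (B.card : ℝ)
          + ((A ∩ B).card : ℝ) ^ 2 - 2 * ((A ∩ B).card : ℝ)) := by
  have hd' : (0 : ℝ) < d := Nat.cast_pos.2 hd
  have hc : 1 / Real.sqrt d ≠ 0 := by positivity
  have hc4 : (1 / Real.sqrt d) ^ 4 = 1 / (d : ℝ) ^ 2 := by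
    rw [div_pow, one_pow, show 4 = 2 * 2 from rfl, pow_mul, Real.sq_sqrt hd'.le]
  simp_rw [sum_mul_sum_eq_sum_dotHashCoeff A B (ψ _)]
  rw [variance_sum_sum_mul_of_isScaledRademacher hindep (fun p => hmeas p.1 p.2)
    (fun p => hunif p.1 p.2) hc, sum_dotHashCoeff_mul_add, sum_dotHashCoeff_diag_sq, hc4]
  field_simp
end

section
/- Let G = (V, E) be a finite simple graph, d a positive integer, and let ψ : V → ℝ^d be a random map such that the d·|V| coordinates {ψ(v)_i : v ∈ V, 1 ≤ i ≤ d} are independent and each is uniformly distributed on {−1/√d, +1/√d}. Fix nodes u, v ∈ V and assume every node in N(u) ∪ N(v) has degree at least 1. Define the random vectors u⃗ = Σ_{x ∈ N(u)} ψ(x)·√(1/|N(x)|) and v⃗ = Σ_{y ∈ N(v)} ψ(y)·√(1/|N(y)|). Then E[u⃗ · v⃗] = Σ_{x ∈ N(u) ∩ N(v)} 1/|N(x)|, i.e., the expected dot product equals the Resource Allocation index of the pair (u, v). -/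
/-!
Write `ξ x i = ψ(x)_i` and `c x = √(1/|N(x)|)`. The coordinates `ξ x i` are independent, centred
and have second moment `1/d`, so `E[ξ x i ξ y i] = δ_{xy}/d`. Expanding the dot product
bilinearly, only the diagonal terms `x = y ∈ N(u) ∩ N(v)` survive, each contributing
`c x ^ 2 / d = 1 / (d |N(x)|)` in each of the `d` coordinates.
-/

open MeasureTheory ProbabilityTheory

section SignRandomVariable

variable {Ω : Type*} [MeasurableSpace Ω] {μ : Measure Ω} [IsProbabilityMeasure μ]
  {X : Ω → ℝ} {a : ℝ}

lemma ae_eq_or_eq_neg_of_measure_eq_half_s5 (hX : Measurable X) (ha : a ≠ 0)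
    (h₁ : μ {ω | X ω = a} = 1 / 2) (h₂ : μ {ω | X ω = -a} = 1 / 2) :
    ∀ᵐ ω ∂μ, X ω = a ∨ X ω = -a := by
  have hA : MeasurableSet {ω | X ω = a} := hX (measurableSet_singleton a)
  have hB : MeasurableSet {ω | X ω = -a} := hX (measurableSet_singleton (-a))
  have hdisj : Disjoint {ω | X ω = a} {ω | X ω = -a} :=
    Set.disjoint_left.mpr fun ω (hωa : X ω = a) (hωb : X ω = -a) =>
      ha (by linarith)
  have hunion : μ ({ω | X ω = a} ∪ {ω | X ω = -a}) = 1 := by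
    rw [measure_union hdisj hB, h₁, h₂, ENNReal.add_halves]
  rw [ae_iff, show {ω | ¬(X ω = a ∨ X ω = -a)} = ({ω | X ω = a} ∪ {ω | X ω = -a})ᶜ by
    ext; simp [not_or]]
  rw [measure_compl (hA.union hB) (measure_ne_top μ _), hunion, measure_univ, tsub_self]

lemma memLp_of_ae_eq_or_eq_neg (hX : AEStronglyMeasurable X μ)
    (hae : ∀ᵐ ω ∂μ, X ω = a ∨ X ω = -a) (p : ENNReal) : MemLp X p μ :=
  MemLp.of_bound hX |a| <| hae.mono fun ω hω => by
    rcases hω with h | h <;> simp [h]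

lemma integral_eq_zero_of_ae_eq_or_eq_neg (hX : Measurable X)
    (hae : ∀ᵐ ω ∂μ, X ω = a ∨ X ω = -a) (h₁ : μ {ω | X ω = a} = 1 / 2) :
    ∫ ω, X ω ∂μ = 0 := by
  set A := {ω | X ω = a}
  have hA : MeasurableSet A := hX (measurableSet_singleton a)
  have hAreal : μ.real A = 1 / 2 := by simp [Measure.real_def, h₁]
  have hon : ∫ ω in A, X ω ∂μ = ∫ _ in A, a ∂μ := setIntegral_congr_fun hA fun _ h => h
  have hoff : ∫ ω in Aᶜ, X ω ∂μ = ∫ _ in Aᶜ, -a ∂μ :=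
    setIntegral_congr_ae hA.compl <| hae.mono fun ω hω hωA => hω.resolve_left hωA
  rw [← integral_add_compl hA ((memLp_of_ae_eq_or_eq_neg hX.aestronglyMeasurable hae 1).integrable
    le_rfl), hon, hoff, setIntegral_const, setIntegral_const, probReal_compl_eq_one_sub hA,
    hAreal]
  norm_num

lemma integral_mul_self_of_ae_eq_or_eq_neg_s5 (hae : ∀ᵐ ω ∂μ, X ω = a ∨ X ω = -a) :
    ∫ ω, X ω * X ω ∂μ = a * a := by
  rw [integral_congr_ae (g := fun _ => a * a) (hae.mono fun ω hω => by
    rcases hω with h | h <;> simp [h]), integral_const, probReal_univ, one_smul]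

end SignRandomVariable

section Orthogonality

variable {Ω : Type*} [MeasurableSpace Ω] {μ : Measure Ω}
  {ι : Type*} [DecidableEq ι] {ξ : ι → Ω → ℝ} {σ2 : ℝ}

lemma integral_mul_eq_ite_of_iIndepFun_s5 (hmeas : ∀ i, AEStronglyMeasurable (ξ i) μ)
    (hindep : iIndepFun ξ μ) (hmean : ∀ i, ∫ ω, ξ i ω ∂μ = 0)
    (hsq : ∀ i, ∫ ω, ξ i ω * ξ i ω ∂μ = σ2) (i j : ι) :
    ∫ ω, ξ i ω * ξ j ω ∂μ = if i = j then σ2 else 0 := by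
  split_ifs with hij
  · subst hij
    exact hsq i
  · have := (hindep.indepFun hij).integral_mul_eq_mul_integral (hmeas i) (hmeas j)
    simpa [hmean] using this

lemma integral_sum_mul_sum_of_orthogonal (hL2 : ∀ i, MemLp (ξ i) 2 μ)
    (horth : ∀ i j, ∫ ω, ξ i ω * ξ j ω ∂μ = if i = j then σ2 else 0)
    (s t : Finset ι) (c e : ι → ℝ) :
    ∫ ω, (∑ x ∈ s, ξ x ω * c x) * (∑ y ∈ t, ξ y ω * e y) ∂μ
      = σ2 * ∑ x ∈ s ∩ t, c x * e x := by
  have hint : ∀ x y, Integrable (fun ω => ξ x ω * ξ y ω) μ := fun x y =>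
    (hL2 x).integrable_mul (hL2 y)
  have hexpand : ∀ ω, (∑ x ∈ s, ξ x ω * c x) * (∑ y ∈ t, ξ y ω * e y)
      = ∑ x ∈ s, ∑ y ∈ t, ξ x ω * ξ y ω * (c x * e y) := fun ω => by
    rw [Finset.sum_mul_sum]
    exact Finset.sum_congr rfl fun _ _ => Finset.sum_congr rfl fun _ _ => by ring
  simp_rw [hexpand]
  rw [integral_finsetSum _ fun x _ => integrable_finsetSum _ fun y _ =>
    (hint x y).mul_const _]
  simp_rw [integral_finsetSum _ fun y _ => (hint _ y).mul_const _, integral_mul_const, horth,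
    ite_mul, zero_mul, Finset.sum_ite_eq, Finset.sum_ite_mem, Finset.mul_sum]

end Orthogonality

theorem dothash_expected_dot_eq_resource_allocation_general
    {Ω : Type*} [MeasurableSpace Ω] (μ : Measure Ω) [IsProbabilityMeasure μ]
    {V : Type*} [Fintype V] [DecidableEq V]
    (G : SimpleGraph V) [DecidableRel G.Adj]
    (d : ℕ) (hd : 0 < d)
    (ψ : Ω → V → Fin d → ℝ)
    (hmeas : ∀ (s : V) (i : Fin d), Measurable fun ω => ψ ω s i)
    (hindep : iIndepFun
      (fun (p : V × Fin d) ω => ψ ω p.1 p.2) μ)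
    (hunif : ∀ (s : V) (i : Fin d),
      μ {ω | ψ ω s i = 1 / Real.sqrt d} = 1/2 ∧
      μ {ω | ψ ω s i = -(1 / Real.sqrt d)} = 1/2)
    (u v : V) :
    ∫ ω, ∑ i,
        (∑ x ∈ G.neighborFinset u, ψ ω x i * Real.sqrt (1 / (G.degree x : ℝ)))
        * (∑ y ∈ G.neighborFinset v, ψ ω y i * Real.sqrt (1 / (G.degree y : ℝ))) ∂μ
      = ∑ x ∈ G.neighborFinset u ∩ G.neighborFinset v, 1 / (G.degree x : ℝ) := by
  have hd' : (d : ℝ) ≠ 0 := Nat.cast_ne_zero.mpr hd.ne'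
  have ha : 1 / Real.sqrt d ≠ 0 := by positivity
  have hae s i := ae_eq_or_eq_neg_of_measure_eq_half_s5 (hmeas s i) ha (hunif s i).1 (hunif s i).2
  have hL2 i s : MemLp (fun ω => ψ ω s i) 2 μ :=
    memLp_of_ae_eq_or_eq_neg (hmeas s i).aestronglyMeasurable (hae s i) 2
  have horth i := integral_mul_eq_ite_of_iIndepFun_s5 (σ2 := 1 / d)
    (fun x => (hmeas x i).aestronglyMeasurable) (hindep.precomp (Prod.mk_left_injective i))
    (fun x => integral_eq_zero_of_ae_eq_or_eq_neg (hmeas x i) (hae x i) (hunif x i).1)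
    (fun x => by rw [integral_mul_self_of_ae_eq_or_eq_neg_s5 (hae x i), div_mul_div_comm, one_mul,
      Real.mul_self_sqrt d.cast_nonneg])
  have hsketch i (w : V) : MemLp (fun ω => ∑ x ∈ G.neighborFinset w,
      ψ ω x i * Real.sqrt (1 / (G.degree x : ℝ))) 2 μ :=
    memLp_finsetSum _ fun x _ => (hL2 i x).mul_const _
  rw [integral_finsetSum _ fun i _ => by exact (hsketch i u).integrable_mul (hsketch i v)]
  simp_rw [integral_sum_mul_sum_of_orthogonal (hL2 _) (horth _),
    Real.mul_self_sqrt (one_div_nonneg.mpr (Nat.cast_nonneg _)), Finset.sum_const,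
    Finset.card_univ, Fintype.card_fin, nsmul_eq_mul, ← mul_assoc, mul_one_div_cancel hd', one_mul]

/-- For a finite simple graph, if every neighbor of `u` or `v` has degree at
least 1, the expected dot product of the Resource-Allocation weighted DotHash sketches of
`u` and `v` equals the Resource Allocation index `∑_{x ∈ N(u) ∩ N(v)} 1 / |N(x)|`. -/
theorem dothash_expected_dot_eq_resource_allocation
    {Ω : Type*} [MeasurableSpace Ω] (μ : Measure Ω) [IsProbabilityMeasure μ]
    {V : Type*} [Fintype V] [DecidableEq V]
    (G : SimpleGraph V) [DecidableRel G.Adj]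
    (d : ℕ) (hd : 0 < d)
    (ψ : Ω → V → Fin d → ℝ)
    (hmeas : ∀ (s : V) (i : Fin d), Measurable fun ω => ψ ω s i)
    (hindep : iIndepFun
      (fun (p : V × Fin d) ω => ψ ω p.1 p.2) μ)
    (hunif : ∀ (s : V) (i : Fin d),
      μ {ω | ψ ω s i = 1 / Real.sqrt d} = 1/2 ∧
      μ {ω | ψ ω s i = -(1 / Real.sqrt d)} = 1/2)
    (u v : V)
    (hdeg : ∀ x ∈ G.neighborFinset u ∪ G.neighborFinset v, 1 ≤ G.degree x) :
    ∫ ω, ∑ i,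
        (∑ x ∈ G.neighborFinset u, ψ ω x i * Real.sqrt (1 / (G.degree x : ℝ)))
        * (∑ y ∈ G.neighborFinset v, ψ ω y i * Real.sqrt (1 / (G.degree y : ℝ))) ∂μ
      = ∑ x ∈ G.neighborFinset u ∩ G.neighborFinset v, 1 / (G.degree x : ℝ) :=
  dothash_expected_dot_eq_resource_allocation_general μ G d hd ψ hmeas hindep hunif u v
end

section
/- Let S be a finite set and let π : S → {1, …, |S|} be a uniformly random bijection (equivalently, a uniformly random permutation, giving a min-wise independent hash of the elements of S). Then for any nonempty subsets A, B ⊆ S, the probability that the minimum hash value over A equals the minimum hash value over B is the Jaccard index of A and B: P(min_{a ∈ A} π(a) = min_{b ∈ B} π(b)) = |A ∩ B| / |A ∪ B|. -/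
open MeasureTheory



namespace MinHashAux

variable {S : Type*} [Fintype S] [DecidableEq S]

def argmin (C : Finset S) (hC : C.Nonempty) (e : S ≃ Fin (Fintype.card S)) : S :=
  e.symm ((C.image fun a => e a).min' (hC.image _))

lemma argmin_mem (C : Finset S) (hC : C.Nonempty) (e : S ≃ Fin (Fintype.card S)) :
    argmin C hC e ∈ C := by
  obtain ⟨x, hx, hex⟩ := Finset.mem_image.1 ((C.image fun a => e a).min'_mem (hC.image _))
  simpa [argmin, ← hex] using hx

lemma apply_argmin (C : Finset S) (hC : C.Nonempty) (e : S ≃ Fin (Fintype.card S)) :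
    e (argmin C hC e) = (C.image fun a => e a).min' (hC.image _) := by
  simp [argmin]

lemma min_eq_iff (A B : Finset S) (hA : A.Nonempty) (hB : B.Nonempty)
    (e : S ≃ Fin (Fintype.card S)) :
    ((A.image fun a => e a).min' (hA.image _) = (B.image fun b => e b).min' (hB.image _))
      ↔ argmin (A ∪ B) (hA.mono Finset.subset_union_left) e ∈ A ∩ B := by
  set hC : (A ∪ B).Nonempty := hA.mono Finset.subset_union_left
  set z := argmin (A ∪ B) hC e with hzdef
  have hz : z ∈ A ∪ B := argmin_mem _ _ _
  have hez : e z = ((A ∪ B).image fun a => e a).min' (hC.image _) := apply_argmin _ _ _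
  have hmA : ((A ∪ B).image fun a => e a).min' (hC.image _)
      ≤ (A.image fun a => e a).min' (hA.image _) :=
    Finset.min'_subset _ (Finset.image_subset_image Finset.subset_union_left)
  have hmB : ((A ∪ B).image fun a => e a).min' (hC.image _)
      ≤ (B.image fun b => e b).min' (hB.image _) :=
    Finset.min'_subset _ (Finset.image_subset_image Finset.subset_union_right)
  constructor
  · intro h
    rcases Finset.mem_union.1 hz with hzA | hzB
    · have h1 : (A.image fun a => e a).min' (hA.image _) ≤ e z :=
        Finset.min'_le _ _ (Finset.mem_image_of_mem _ hzA)
      have h2 : e z = (A.image fun a => e a).min' (hA.image _) :=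
        le_antisymm (hez ▸ hmA) h1
      have h3 : e z ∈ B.image fun b => e b := by
        rw [h2, h]; exact Finset.min'_mem _ _
      obtain ⟨y, hy, hey⟩ := Finset.mem_image.1 h3
      have : y = z := e.injective hey
      exact Finset.mem_inter.2 ⟨hzA, this ▸ hy⟩
    · have h1 : (B.image fun b => e b).min' (hB.image _) ≤ e z :=
        Finset.min'_le _ _ (Finset.mem_image_of_mem _ hzB)
      have h2 : e z = (B.image fun b => e b).min' (hB.image _) :=
        le_antisymm (hez ▸ hmB) h1
      have h3 : e z ∈ A.image fun a => e a := by
        rw [h2, ← h]; exact Finset.min'_mem _ _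
      obtain ⟨y, hy, hey⟩ := Finset.mem_image.1 h3
      have : y = z := e.injective hey
      exact Finset.mem_inter.2 ⟨this ▸ hy, hzB⟩
  · intro h
    have hzA := Finset.mem_inter.1 h
    have h1 : (A.image fun a => e a).min' (hA.image _) = e z :=
      le_antisymm (Finset.min'_le _ _ (Finset.mem_image_of_mem _ hzA.1)) (hez ▸ hmA)
    have h2 : (B.image fun b => e b).min' (hB.image _) = e z :=
      le_antisymm (Finset.min'_le _ _ (Finset.mem_image_of_mem _ hzA.2)) (hez ▸ hmB)
    rw [h1, h2]

lemma image_swap (C : Finset S) {x y : S} (hx : x ∈ C) (hy : y ∈ C) :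
    C.image (Equiv.swap x y) = C := by
  apply Finset.eq_of_subset_of_card_le
  · intro z hz
    obtain ⟨w, hw, rfl⟩ := Finset.mem_image.1 hz
    rcases eq_or_ne w x with rfl | hwx
    · simpa [Equiv.swap_apply_left] using hy
    rcases eq_or_ne w y with rfl | hwy
    · simpa [Equiv.swap_apply_right] using hx
    · simpa [Equiv.swap_apply_of_ne_of_ne hwx hwy] using hw
  · rw [Finset.card_image_of_injective _ (Equiv.injective _)]

lemma argmin_swap (C : Finset S) (hC : C.Nonempty) {x y : S} (hx : x ∈ C) (hy : y ∈ C)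
    (e : S ≃ Fin (Fintype.card S)) :
    argmin C hC ((Equiv.swap x y).trans e) = Equiv.swap x y (argmin C hC e) := by
  have himg : (C.image fun a => ((Equiv.swap x y).trans e) a) = C.image fun a => e a := by
    have : (C.image fun a => ((Equiv.swap x y).trans e) a)
        = (C.image (Equiv.swap x y)).image fun a => e a := by
      rw [Finset.image_image]; rfl
    rw [this, image_swap C hx hy]
  simp only [argmin, himg, Equiv.symm_trans_apply, Equiv.symm_symm, Equiv.symm_swap]

lemma fib_card_eq (C : Finset S) (hC : C.Nonempty) {x y : S} (hx : x ∈ C) (hy : y ∈ C) :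
    (Finset.univ.filter fun e : S ≃ Fin (Fintype.card S) => argmin C hC e = x).card
      = (Finset.univ.filter fun e => argmin C hC e = y).card := by
  apply Finset.card_bij' (fun e _ => (Equiv.swap x y).trans e)
    (fun e _ => (Equiv.swap x y).trans e)
  · intro e he
    simp only [Finset.mem_filter, Finset.mem_univ, true_and] at he ⊢
    rw [argmin_swap C hC hx hy, he, Equiv.swap_apply_left]
  · intro e he
    simp only [Finset.mem_filter, Finset.mem_univ, true_and] at he ⊢
    rw [argmin_swap C hC hx hy, he, Equiv.swap_apply_right]
  · intro e _
    rw [← Equiv.trans_assoc, Equiv.swap_swap, Equiv.refl_trans]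
  · intro e _
    rw [← Equiv.trans_assoc, Equiv.swap_swap, Equiv.refl_trans]

end MinHashAux


open MinHashAux Finset

/-- MinHash property. If `π` is a uniformly random bijection from a finite set
`S` to `{1, …, |S|}` (each of the `|S|!` bijections being equally likely), then for nonempty
subsets `A, B ⊆ S`, the probability that the minimum rank over `A` equals the minimum rank
over `B` is the Jaccard index `|A ∩ B| / |A ∪ B|`. -/
theorem minhash_prob_min_eq_jaccard
    {Ω : Type*} [MeasurableSpace Ω] (μ : Measure Ω) [IsProbabilityMeasure μ]
    {S : Type*} [Fintype S] [DecidableEq S]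
    (π : Ω → S ≃ Fin (Fintype.card S))
    (hunif : ∀ e : S ≃ Fin (Fintype.card S),
      μ {ω | π ω = e} = 1 / (Fintype.card (S ≃ Fin (Fintype.card S)) : ENNReal))
    (A B : Finset S) (hA : A.Nonempty) (hB : B.Nonempty) :
    μ {ω | (A.image fun a => π ω a).min' (hA.image _) =
           (B.image fun b => π ω b).min' (hB.image _)}
      = ENNReal.ofReal (((A ∩ B).card : ℝ) / ((A ∪ B).card : ℝ)) := by
  classical
  have hC : (A ∪ B).Nonempty := hA.mono Finset.subset_union_left
  set P : (S ≃ Fin (Fintype.card S)) → Prop := fun e =>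
    (A.image fun a => e a).min' (hA.image _) = (B.image fun b => e b).min' (hB.image _)
    with hPdef
  -- counting
  obtain ⟨x₀, hx₀⟩ := id hC
  set c := (Finset.univ.filter
    fun e : S ≃ Fin (Fintype.card S) => argmin (A ∪ B) hC e = x₀).card with hcdef
  have hfib : ∀ x ∈ A ∪ B,
      (Finset.univ.filter fun e : S ≃ Fin (Fintype.card S) =>
        argmin (A ∪ B) hC e = x).card = c :=
    fun x hx => fib_card_eq (A ∪ B) hC hx hx₀
  have hNcount : Fintype.card (S ≃ Fin (Fintype.card S)) = (A ∪ B).card * c := by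
    have h := Finset.card_eq_sum_card_fiberwise
      (f := fun e : S ≃ Fin (Fintype.card S) => argmin (A ∪ B) hC e)
      (s := Finset.univ) (t := A ∪ B) (fun e _ => argmin_mem _ _ _)
    rw [Finset.card_univ] at h
    rw [h, Finset.sum_congr rfl hfib, Finset.sum_const, smul_eq_mul]
  have hEcount : (Finset.univ.filter P).card = (A ∩ B).card * c := by
    have h1 : (Finset.univ.filter P)
        = Finset.univ.filter
          (fun e : S ≃ Fin (Fintype.card S) => argmin (A ∪ B) hC e ∈ A ∩ B) :=
      Finset.filter_congr (fun e _ => min_eq_iff A B hA hB e)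
    have h2 := Finset.card_eq_sum_card_fiberwise
      (f := fun e : S ≃ Fin (Fintype.card S) => argmin (A ∪ B) hC e)
      (s := Finset.univ.filter
        (fun e : S ≃ Fin (Fintype.card S) => argmin (A ∪ B) hC e ∈ A ∩ B))
      (t := A ∩ B) (fun e he => (Finset.mem_filter.1 he).2)
    rw [h1, h2]
    rw [Finset.sum_congr rfl (fun x hx => ?_), Finset.sum_const, smul_eq_mul]
    rw [Finset.filter_filter]
    have h3 : Finset.univ.filter
        (fun e : S ≃ Fin (Fintype.card S) =>
          argmin (A ∪ B) hC e ∈ A ∩ B ∧ argmin (A ∪ B) hC e = x)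
        = Finset.univ.filter
          (fun e : S ≃ Fin (Fintype.card S) => argmin (A ∪ B) hC e = x) :=
      Finset.filter_congr (fun e _ => ⟨fun h => h.2, fun h => ⟨h ▸ hx, h⟩⟩)
    rw [h3]
    exact hfib x (Finset.mem_union.2 (Or.inl (Finset.mem_inter.1 hx).1))
  -- measure computation
  have : Nonempty (S ≃ Fin (Fintype.card S)) := ⟨Fintype.equivFin S⟩
  have hNpos : 0 < Fintype.card (S ≃ Fin (Fintype.card S)) := Fintype.card_pos
  have hNne : (Fintype.card (S ≃ Fin (Fintype.card S)) : ENNReal) ≠ 0 :=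
    Nat.cast_ne_zero.2 hNpos.ne'
  have hNtop : (Fintype.card (S ≃ Fin (Fintype.card S)) : ENNReal) ≠ ⊤ :=
    ENNReal.natCast_ne_top _
  set Np : ENNReal := ((Fintype.card (S ≃ Fin (Fintype.card S)) : ENNReal))⁻¹ with hNp
  -- the event and its complement as finite unions of fibers
  have hEv : {ω | P (π ω)} = ⋃ e ∈ (Finset.univ.filter P), {ω | π ω = e} := by
    ext ω
    simp only [Set.mem_setOf_eq, Set.mem_iUnion, Finset.mem_filter, Finset.mem_univ,
      true_and, exists_prop]
    exact ⟨fun h => ⟨π ω, h, rfl⟩, fun ⟨e, he, hpe⟩ => hpe ▸ he⟩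
  have hEvc : {ω | P (π ω)}ᶜ = ⋃ e ∈ (Finset.univ.filter fun e => ¬ P e), {ω | π ω = e} := by
    ext ω
    simp only [Set.mem_compl_iff, Set.mem_setOf_eq, Set.mem_iUnion, Finset.mem_filter,
      Finset.mem_univ, true_and, exists_prop]
    exact ⟨fun h => ⟨π ω, h, rfl⟩, fun ⟨e, he, hpe⟩ => hpe ▸ he⟩
  have hbound : ∀ (s : Finset (S ≃ Fin (Fintype.card S))),
      μ (⋃ e ∈ s, {ω | π ω = e}) ≤ s.card * Np := by
    intro s
    calc μ (⋃ e ∈ s, {ω | π ω = e}) ≤ ∑ e ∈ s, μ {ω | π ω = e} :=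
          measure_biUnion_finset_le _ _
      _ = ∑ _e ∈ s, Np := by
          refine Finset.sum_congr rfl fun e _ => ?_
          rw [hunif e, one_div]
      _ = s.card * Np := by rw [Finset.sum_const, nsmul_eq_mul]
  have h1 : μ {ω | P (π ω)} ≤ (Finset.univ.filter P).card * Np := hEv ▸ hbound _
  have h2 : μ {ω | P (π ω)}ᶜ ≤ (Finset.univ.filter fun e => ¬ P e).card * Np :=
    hEvc ▸ hbound _
  have hsum : ((Finset.univ.filter P).card : ENNReal) * Np
      + (Finset.univ.filter fun e => ¬ P e).card * Np = 1 := by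
    rw [← add_mul, ← Nat.cast_add,
      Finset.card_filter_add_card_filter_not (p := P), Finset.card_univ]
    exact ENNReal.mul_inv_cancel hNne hNtop
  have hfin : ((Finset.univ.filter fun e => ¬ P e).card : ENNReal) * Np ≠ ⊤ :=
    ENNReal.mul_ne_top (ENNReal.natCast_ne_top _) (ENNReal.inv_ne_top.2 hNne)
  have hge : ((Finset.univ.filter P).card : ENNReal) * Np ≤ μ {ω | P (π ω)} := by
    have e1 : ((Finset.univ.filter P).card : ENNReal) * Np
        = 1 - (Finset.univ.filter fun e => ¬ P e).card * Np :=
      ENNReal.eq_sub_of_add_eq hfin hsum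
    have e2 : (1 : ENNReal) ≤ μ {ω | P (π ω)} + μ {ω | P (π ω)}ᶜ := by
      have := measure_union_le (μ := μ) {ω | P (π ω)} {ω | P (π ω)}ᶜ
      rwa [Set.union_compl_self, measure_univ] at this
    calc ((Finset.univ.filter P).card : ENNReal) * Np
        = 1 - (Finset.univ.filter fun e => ¬ P e).card * Np := e1
      _ ≤ 1 - μ {ω | P (π ω)}ᶜ := tsub_le_tsub_left h2 1
      _ ≤ μ {ω | P (π ω)} := tsub_le_iff_right.2 e2
  have hval : μ {ω | P (π ω)} = ((Finset.univ.filter P).card : ENNReal) * Np :=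
    le_antisymm h1 hge
  -- final arithmetic
  have hUne : ((A ∪ B).card : ℝ) ≠ 0 := by
    exact_mod_cast (Finset.card_pos.2 hC).ne'
  have hcne : (c : ENNReal) ≠ 0 := by
    refine Nat.cast_ne_zero.2 ?_
    intro hc0
    rw [hc0, mul_zero] at hNcount
    exact hNpos.ne' hNcount
  have hfinal : μ {ω | P (π ω)} = ((A ∩ B).card : ENNReal) / ((A ∪ B).card : ENNReal) := by
    rw [hval, hEcount, hNp, hNcount]
    push_cast
    rw [← div_eq_mul_inv, ENNReal.mul_div_mul_right _ _ hcne (ENNReal.natCast_ne_top c)]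
  rw [show {ω | (A.image fun a => π ω a).min' (hA.image _) =
           (B.image fun b => π ω b).min' (hB.image _)} = {ω | P (π ω)} from rfl]
  rw [hfinal, ENNReal.ofReal_div_of_pos, ENNReal.ofReal_natCast, ENNReal.ofReal_natCast]
  exact_mod_cast Finset.card_pos.2 hC
end
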